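/- arXiv:0908.1472 — 2 statements merged into one kernel-verified Lean document; each statement's English description precedes it below -/
import Mathlib

section
/- Let G be a finite p-group with G = AH where A is an abelian normal subgroup and H a subgroup, and suppose A ∩ H ⊆ Φ(G). Then G/Φ(G) is isomorphic to A/((A∩H)A^p[A,H]) × H/((A∩H)Φ(H)). -/
open scoped Pointwise
open scoped commutatorElement

/-- `A^p[A,H]`: the subgroup generated by `p`-th powers of elements of `A`
together with commutators `[a,h]` for `a ∈ A`, `h ∈ H`. -/
def pPowComm (p : ℕ) {G : Type} [Group G] (A H : Subgroup G) : Subgroup G :=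
  Subgroup.closure ({x | ∃ a ∈ A, x = a ^ p} ∪ {x | ∃ a ∈ A, ∃ h ∈ H, x = ⁅a, h⁆})

/-!
Only the two halves of the Burnside basis theorem are needed. Every maximal subgroup of a finite
`p`-group is normal of index `p`, so `p`-th powers and commutators lie in `Φ(G)`. Conversely,
if `G/N` is abelian of exponent `p` then it is an `𝔽_p`-vector space, whose hyperplanes intersect
trivially, so `Φ(G) ≤ N`. Applied to `N = A^p[A,H] Φ(H)` (normal since `G = AH`), this gives
`Φ(G) ≤ A^p[A,H] Φ(H)`, while `A ∩ H`, `A^p[A,H]` and `Φ(H)` all lie in `Φ(G)`. Hence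
`(a, h) ↦ a h Φ(G)` is a surjective homomorphism `A × H → G/Φ(G)` (the target is abelian) with
kernel `(A∩H)A^p[A,H] × (A∩H)Φ(H)`: if `a h = k y` with `k ∈ A^p[A,H]` and `y ∈ Φ(H)`, then
`k⁻¹ a = y h⁻¹ ∈ A ∩ H`.
-/

open Subgroup

theorem Order.radical_eq_bot {α : Type*} [CompleteLattice α] [IsModularLattice α]
    [ComplementedLattice α] [IsAtomic α] : Order.radical α = ⊥ := by
  refine (eq_bot_or_exists_atom_le _).resolve_right ?_
  rintro ⟨a, ha, har⟩
  obtain ⟨c, hac⟩ := exists_isCompl a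
  have hc : IsCoatom c := hac.symm.isCoatom_iff_isAtom.mpr ha
  exact ha.1 (hac.disjoint.eq_bot_of_le (har.trans (Order.radical_le_coatom hc)))

theorem mem_frattini_iff {G : Type*} [Group G] {x : G} :
    x ∈ frattini G ↔ ∀ M : Subgroup G, IsCoatom M → x ∈ M := by
  simp [frattini, Order.radical, mem_iInf]

theorem frattini_eq_bot_of_pow_eq_one {Q : Type*} [CommGroup Q] (p : ℕ) [Fact p.Prime]
    (hQ : ∀ x : Q, x ^ p = 1) : frattini Q = ⊥ := by
  let _inst : Module (ZMod p) (Additive Q) :=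
    AddCommGroup.zmodModule (n := p) (G := Additive Q) hQ
  let e : Subgroup Q ≃o Submodule (ZMod p) (Additive Q) :=
    Subgroup.toAddSubgroup.trans (AddSubgroup.toZModSubmodule (M := Additive Q) p)
  have he : e (frattini Q) = ⊥ := e.map_radical.trans Order.radical_eq_bot
  exact e.injective (he.trans e.map_bot.symm)

theorem QuotientGroup.commute_mk_iff {G : Type*} [Group G] {N : Subgroup G} [N.Normal]
    {a b : G} : Commute (a : G ⧸ N) b ↔ ⁅a, b⁆ ∈ N := by
  rw [← commutatorElement_eq_one_iff_commute, ← QuotientGroup.mk'_apply, ← QuotientGroup.mk'_apply,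
    ← map_commutatorElement, QuotientGroup.mk'_apply, QuotientGroup.eq_one_iff]

theorem frattini_le_of_commutator_le_of_pow_mem {G : Type*} [Group G] (p : ℕ) [Fact p.Prime]
    {N : Subgroup G} [N.Normal] (hcomm : commutator G ≤ N) (hpow : ∀ g : G, g ^ p ∈ N) :
    frattini G ≤ N := by
  let _inst : CommGroup (G ⧸ N) :=
    { mul_comm := fun x y => by
        induction x using QuotientGroup.induction_on
        induction y using QuotientGroup.induction_on
        exact QuotientGroup.commute_mk_iff.mpr
          (hcomm (commutator_mem_commutator (mem_top _) (mem_top _))) }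
  have hQ : frattini (G ⧸ N) = ⊥ := frattini_eq_bot_of_pow_eq_one p fun x => by
    induction x using QuotientGroup.induction_on
    exact (QuotientGroup.eq_one_iff _).mpr (hpow _)
  simpa [hQ] using frattini_le_comap_frattini_of_surjective (QuotientGroup.mk'_surjective N)

theorem frattini_le_of_mul_eq_univ {G : Type*} [Group G] (p : ℕ) [Fact p.Prime]
    {A H N : Subgroup G} [N.Normal] (hprod : (A : Set G) * (H : Set G) = Set.univ)
    (hAA : ⁅A, A⁆ ≤ N) (hAH : ⁅A, H⁆ ≤ N) (hHH : ⁅H, H⁆ ≤ N)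
    (hpA : ∀ a ∈ A, a ^ p ∈ N) (hpH : ∀ h ∈ H, h ^ p ∈ N) : frattini G ≤ N := by
  have hdecomp (g : G) : ∃ a ∈ A, ∃ h ∈ H, a * h = g := Set.mem_mul.mp (hprod ▸ Set.mem_univ g)
  have hcommA {a : G} (ha : a ∈ A) (g : G) : Commute (a : G ⧸ N) g := by
    obtain ⟨a', ha', h', hh', rfl⟩ := hdecomp g
    rw [QuotientGroup.mk_mul]
    exact (QuotientGroup.commute_mk_iff.mpr (hAA (commutator_mem_commutator ha ha'))).mul_right
      (QuotientGroup.commute_mk_iff.mpr (hAH (commutator_mem_commutator ha hh')))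
  have hcommH {h : G} (hh : h ∈ H) (g : G) : Commute (h : G ⧸ N) g := by
    obtain ⟨a', ha', h', hh', rfl⟩ := hdecomp g
    rw [QuotientGroup.mk_mul]
    exact (hcommA ha' h).symm.mul_right
      (QuotientGroup.commute_mk_iff.mpr (hHH (commutator_mem_commutator hh hh')))
  refine frattini_le_of_commutator_le_of_pow_mem p
    (commutator_le.mpr fun g _ g' _ => QuotientGroup.commute_mk_iff.mp ?_) fun g => ?_
  · obtain ⟨a, ha, h, hh, rfl⟩ := hdecomp g
    rw [QuotientGroup.mk_mul]
    exact (hcommA ha g').mul_left (hcommH hh g')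
  · obtain ⟨a, ha, h, hh, rfl⟩ := hdecomp g
    rw [← QuotientGroup.eq_one_iff, QuotientGroup.mk_pow, QuotientGroup.mk_mul,
      (hcommA ha h).mul_pow, ← QuotientGroup.mk_pow, ← QuotientGroup.mk_pow,
      (QuotientGroup.eq_one_iff _).mpr (hpA a ha), (QuotientGroup.eq_one_iff _).mpr (hpH h hh),
      one_mul]

namespace IsPGroup

variable {p : ℕ} [Fact p.Prime] {G : Type*} [Group G] [Finite G]

theorem card_quotient_of_isCoatom (hG : IsPGroup p G) {M : Subgroup G} [M.Normal]
    (hM : IsCoatom M) : Nat.card (G ⧸ M) = p := by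
  let e : Subgroup (G ⧸ M) ≃o Set.Ici M := QuotientGroup.comapMk'OrderIso M
  have : IsSimpleOrder (Subgroup (G ⧸ M)) :=
    e.isSimpleOrder_iff.mpr (Set.isSimpleOrder_Ici_iff_isCoatom.mpr hM)
  rcases (hG.to_quotient M).card_eq_or_dvd with hone | hdvd
  · have := (Nat.card_eq_one_iff_unique.mp hone).1
    exact absurd (Subsingleton.elim (⊥ : Subgroup (G ⧸ M)) ⊤) bot_ne_top
  · obtain ⟨x, hx⟩ := exists_prime_orderOf_dvd_card' p hdvd
    have hx1 : x ≠ 1 := fun h => (Fact.out : p.Prime).one_lt.ne' (by rw [← hx, h, orderOf_one])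
    have htop : zpowers x = ⊤ := (eq_bot_or_eq_top _).resolve_left (zpowers_ne_bot.mpr hx1)
    rw [← hx, ← Nat.card_zpowers, htop, card_top]

theorem pow_mem_frattini (hG : IsPGroup p G) (g : G) : g ^ p ∈ frattini G := by
  have : Group.IsNilpotent G := hG.isNilpotent
  refine mem_frattini_iff.mpr fun M hM => ?_
  have : M.Normal := Group.normalizerCondition_of_isNilpotent.normal_of_coatom M hM
  rw [← QuotientGroup.eq_one_iff, QuotientGroup.mk_pow, ← hG.card_quotient_of_isCoatom hM]
  exact pow_card_eq_one'

theorem commutator_le_frattini (hG : IsPGroup p G) : commutator G ≤ frattini G := by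
  have : Group.IsNilpotent G := hG.isNilpotent
  refine commutator_le.mpr fun g₁ _ g₂ _ => mem_frattini_iff.mpr fun M hM => ?_
  have : M.Normal := Group.normalizerCondition_of_isNilpotent.normal_of_coatom M hM
  have : IsCyclic (G ⧸ M) := isCyclic_of_prime_card (hG.card_quotient_of_isCoatom hM)
  exact QuotientGroup.commute_mk_iff.mp (mul_comm' _ _)

theorem map_subtype_frattini_le (hG : IsPGroup p G) (H : Subgroup G) :
    (frattini H).map H.subtype ≤ frattini G := by
  rw [map_le_iff_le_comap]
  have : ((frattini G).comap H.subtype).Normal := Normal.comap inferInstance _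
  refine frattini_le_of_commutator_le_of_pow_mem p ?_ fun h => hG.pow_mem_frattini (h : G)
  exact commutator_le.mpr fun h₁ _ h₂ _ =>
    hG.commutator_le_frattini (commutator_mem_commutator (mem_top (h₁ : G)) (mem_top (h₂ : G)))

end IsPGroup

theorem Subgroup.sup_eq_top_of_mul_eq_univ {G : Type*} [Group G] {A H : Subgroup G}
    (hprod : (A : Set G) * (H : Set G) = Set.univ) : A ⊔ H = ⊤ := by
  refine (Subgroup.eq_top_iff' _).mpr fun g => ?_
  obtain ⟨a, ha, h, hh, rfl⟩ := Set.mem_mul.mp (hprod ▸ Set.mem_univ g)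
  exact mul_mem_sup ha hh

theorem Subgroup.normal_of_sup_eq_top_of_le_normalizer {G : Type*} [Group G] {A H N : Subgroup G}
    (hAH : A ⊔ H = ⊤) (hA : A ≤ normalizer N) (hH : H ≤ normalizer N) : N.Normal :=
  normalizer_eq_top_iff.mp (top_unique (hAH ▸ sup_le hA hH))

section Decomposition

variable {p : ℕ} {G : Type} [Group G] {A H : Subgroup G}

theorem pPowComm_le [A.Normal] : pPowComm p A H ≤ A := by
  refine (closure_le _).mpr ?_
  rintro _ (⟨a, ha, rfl⟩ | ⟨a, ha, h, hh, rfl⟩)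
  · exact pow_mem ha p
  · exact commutator_le_left A H (commutator_mem_commutator ha hh)

theorem commutator_le_pPowComm : ⁅A, H⁆ ≤ pPowComm p A H :=
  commutator_le.mpr fun a ha h hh => subset_closure (Or.inr ⟨a, ha, h, hh, rfl⟩)

theorem le_normalizer_pPowComm_left [A.Normal] [IsMulCommutative A] :
    A ≤ normalizer (pPowComm p A H : Set G) :=
  le_normalizer_iff.mpr fun a ha k hk => by
    rwa [setLike_mul_comm ha (pPowComm_le hk), mul_inv_cancel_right]

theorem le_normalizer_pPowComm_right [A.Normal] : H ≤ normalizer (pPowComm p A H : Set G) := by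
  refine le_normalizer_closure_iff.mpr ?_
  rintro h hh _ (⟨a, ha, rfl⟩ | ⟨a, ha, h', hh', rfl⟩)
  · rw [← conj_pow]
    exact subset_closure (Or.inl ⟨_, Normal.conj_mem ‹_› a ha h, rfl⟩)
  · refine subset_closure (Or.inr ⟨_, Normal.conj_mem ‹_› a ha h, _,
      mul_mem (mul_mem hh hh') (inv_mem hh), ?_⟩)
    simp only [commutatorElement_def]
    group

theorem pPowComm_normal [A.Normal] [IsMulCommutative A] (hAH : A ⊔ H = ⊤) :
    (pPowComm p A H).Normal :=
  normal_of_sup_eq_top_of_le_normalizer hAH le_normalizer_pPowComm_left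
    le_normalizer_pPowComm_right

variable [Fact p.Prime] [Finite G]

theorem pPowComm_le_frattini (hG : IsPGroup p G) : pPowComm p A H ≤ frattini G := by
  refine (closure_le _).mpr ?_
  rintro _ (⟨a, -, rfl⟩ | ⟨a, -, h, -, rfl⟩)
  · exact hG.pow_mem_frattini a
  · exact hG.commutator_le_frattini (commutator_mem_commutator (mem_top a) (mem_top h))

theorem frattini_le_pPowComm_sup_map_frattini (hG : IsPGroup p G) [A.Normal] [IsMulCommutative A]
    (hprod : (A : Set G) * (H : Set G) = Set.univ) :
    frattini G ≤ pPowComm p A H ⊔ (frattini H).map H.subtype := by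
  have hAH := sup_eq_top_of_mul_eq_univ hprod
  have := pPowComm_normal (p := p) hAH
  have : (pPowComm p A H ⊔ (frattini H).map H.subtype).Normal := by
    refine normal_of_sup_eq_top_of_le_normalizer hAH ?_ ?_
    · rw [sup_eq_closure]
      refine le_normalizer_closure_iff.mpr fun a ha x hx => ?_
      rw [← sup_eq_closure]
      rcases hx with hx | ⟨y, hy, rfl⟩
      · exact mem_sup_left (Normal.conj_mem ‹_› x hx a)
      · rw [show a * H.subtype y * a⁻¹ = ⁅a, (y : G)⁆ * y by simp [commutatorElement_def]]
        exact mul_mem (mem_sup_left (commutator_le_pPowComm (commutator_mem_commutator ha y.2)))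
          (mem_sup_right ⟨y, hy, rfl⟩)
    · refine (le_inf le_normalizer_pPowComm_right ?_).trans
        (normalizer_inf_normalizer_le_normalizer_sup _ _)
      simpa [normalizer_eq_top, ← MonoidHom.range_eq_map] using
        le_normalizer_map (H := frattini H) H.subtype
  refine frattini_le_of_mul_eq_univ p hprod ?_ ?_ ?_ ?_ ?_
  · rw [commutator_eq_bot_iff_le_centralizer.mpr (le_centralizer A)]
    exact bot_le
  · exact le_sup_of_le_left commutator_le_pPowComm
  · refine le_sup_of_le_right (commutator_le.mpr fun h hh h' hh' => ?_)
    exact ⟨⁅⟨h, hh⟩, ⟨h', hh'⟩⁆, (hG.to_subgroup H).commutator_le_frattini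
      (commutator_mem_commutator (mem_top _) (mem_top _)), rfl⟩
  · exact fun a ha => mem_sup_left (subset_closure (Or.inl ⟨a, ha, rfl⟩))
  · exact fun h hh => mem_sup_right ⟨_, (hG.to_subgroup H).pow_mem_frattini ⟨h, hh⟩, rfl⟩

theorem mul_mem_frattini_iff_of_mul_eq_univ (hG : IsPGroup p G) [A.Normal] [IsMulCommutative A]
    (hprod : (A : Set G) * (H : Set G) = Set.univ) (hcap : A ⊓ H ≤ frattini G) {a h : G}
    (ha : a ∈ A) (hh : h ∈ H) :
    a * h ∈ frattini G ↔
      a ∈ A ⊓ H ⊔ pPowComm p A H ∧ h ∈ A ⊓ H ⊔ (frattini H).map H.subtype := by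
  refine ⟨fun hah => ?_, fun ⟨ha', hh'⟩ => mul_mem (sup_le hcap (pPowComm_le_frattini hG) ha')
    (sup_le hcap (hG.map_subtype_frattini_le H) hh')⟩
  have := pPowComm_normal (p := p) (sup_eq_top_of_mul_eq_univ hprod)
  obtain ⟨k, hk, y, hy, hky⟩ :=
    mem_sup_of_normal_left.mp (frattini_le_pPowComm_sup_map_frattini hG hprod hah)
  have hc : k⁻¹ * a = y * h⁻¹ := by
    rw [show y = k⁻¹ * (a * h) by rw [← hky]; group]
    group
  have hcAH : k⁻¹ * a ∈ A ⊓ H := mem_inf.mpr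
    ⟨mul_mem (inv_mem (pPowComm_le hk)) ha, hc ▸ mul_mem (map_subtype_le _ hy) (inv_mem hh)⟩
  constructor
  · rw [show a = k * (k⁻¹ * a) by group]
    exact mul_mem (mem_sup_right hk) (mem_sup_left hcAH)
  · rw [show h = (k⁻¹ * a)⁻¹ * y by rw [hc]; group]
    exact mul_mem_sup (inv_mem hcAH) hy

end Decomposition

/-- If `G = AH` is a decomposition of a finite `p`-group with `A` abelian normal and
`A ∩ H ⊆ Φ(G)`, then `G/Φ(G) ≅ A/((A∩H)A^p[A,H]) × H/((A∩H)Φ(H))`. -/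
theorem frattiniQuotient_of_decomposition (p : ℕ) [Fact p.Prime] (G : Type) [Group G]
    [Finite G] (hG : IsPGroup p G) (A H : Subgroup G) [A.Normal] [IsMulCommutative A]
    (hprod : (A : Set G) * (H : Set G) = Set.univ)
    (hcap : A ⊓ H ≤ frattini G)
    [hN : ((A ⊓ H).subgroupOf H ⊔ frattini ↥H).Normal] :
    Nonempty ((G ⧸ frattini G) ≃*
      (↥A ⧸ ((A ⊓ H) ⊔ pPowComm p A H).subgroupOf A) ×
      (↥H ⧸ ((A ⊓ H).subgroupOf H ⊔ frattini ↥H))) := by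
  let π := QuotientGroup.mk' (frattini G)
  let f : A × H →* G ⧸ frattini G := (π.comp A.subtype).noncommCoprod (π.comp H.subtype)
    fun a h => QuotientGroup.commute_mk_iff.mpr
      (hG.commutator_le_frattini (commutator_mem_commutator (mem_top _) (mem_top _)))
  have hf : Function.Surjective f := by
    intro x
    induction x using QuotientGroup.induction_on with | H g => ?_
    obtain ⟨a, ha, h, hh, rfl⟩ := Set.mem_mul.mp (hprod ▸ Set.mem_univ g)
    exact ⟨(⟨a, ha⟩, ⟨h, hh⟩), rfl⟩
  have hker : f.ker = (((A ⊓ H) ⊔ pPowComm p A H).subgroupOf A).prod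
      ((A ⊓ H).subgroupOf H ⊔ frattini ↥H) := by
    ext ⟨⟨a, ha⟩, ⟨h, hh⟩⟩
    rw [mem_prod, mem_subgroupOf, ← mem_map_iff_mem H.subtype_injective, Subgroup.map_sup,
      subgroupOf_map_subtype, inf_right_idem, MonoidHom.mem_ker]
    exact (QuotientGroup.eq_one_iff _).trans
      (mul_mem_frattini_iff_of_mul_eq_univ hG hprod hcap ha hh)
  exact ⟨(QuotientGroup.quotientKerEquivOfSurjective f hf).symm.trans
    ((QuotientGroup.quotientMulEquivOfEq hker).trans (QuotientGroup.prodMulEquiv _ _))⟩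
end

section
/- The family of finite semiabelian groups is closed under direct products: if G and H are semiabelian, so is G × H. -/
open scoped Pointwise

/-- The minimal family of finite groups containing the trivial group, closed under
semidirect products with finite abelian groups, and closed under quotients. -/
inductive IsSemiabelian : ∀ (G : Type) [Group G], Prop where
  | triv : IsSemiabelian PUnit
  | sdp {A H : Type} [CommGroup A] [Group H] [Finite A] [Finite H]
      (φ : H →* MulAut A) (hH : IsSemiabelian H) : IsSemiabelian (A ⋊[φ] H)
  | quot {G₁ G₂ : Type} [Group G₁] [Group G₂] [Finite G₁] (f : G₁ →* G₂)
      (hf : Function.Surjective f) (hG : IsSemiabelian G₁) : IsSemiabelian G₂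

/-- `(A ⋊ K) × H` is isomorphic to `A ⋊ (K × H)` where `H` acts trivially. -/
def sdpProdEquiv {A K H : Type} [CommGroup A] [Group K] [Group H] (φ : K →* MulAut A) :
    (A ⋊[φ.comp (MonoidHom.fst K H)] (K × H)) ≃* (A ⋊[φ] K) × H where
  toFun x := (⟨x.left, x.right.1⟩, x.right.2)
  invFun x := ⟨x.1.left, (x.1.right, x.2)⟩
  left_inv x := rfl
  right_inv x := rfl
  map_mul' x y := rfl

instance {A K : Type} [CommGroup A] [Group K] [Finite A] [Finite K] (φ : K →* MulAut A) :
    Finite (A ⋊[φ] K) :=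
  Finite.of_equiv (A × K)
    ⟨fun x => ⟨x.1, x.2⟩, fun x => (x.left, x.right), fun _ => rfl, fun _ => rfl⟩

theorem IsSemiabelian.of_mulEquiv {G₁ G₂ : Type} [Group G₁] [Group G₂] [Finite G₁]
    (e : G₁ ≃* G₂) (h : IsSemiabelian G₁) : IsSemiabelian G₂ :=
  IsSemiabelian.quot e.toMonoidHom (fun y => ⟨e.symm y, e.apply_symm_apply y⟩) h

/-- The family of finite semiabelian groups is closed under direct products. -/
theorem isSemiabelian_prod (G H : Type) [Group G] [Group H] [Finite G] [Finite H]
    (hG : IsSemiabelian G) (hH : IsSemiabelian H) : IsSemiabelian (G × H) := by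
  clear ‹Finite G›
  induction hG with
  | triv =>
      exact IsSemiabelian.of_mulEquiv
        ⟨⟨fun h => (PUnit.unit, h), fun x => x.2, fun _ => rfl, fun _ => rfl⟩, fun _ _ => rfl⟩ hH
  | @sdp A K _ _ _ _ φ hK ih =>
      exact IsSemiabelian.of_mulEquiv (sdpProdEquiv φ)
        (IsSemiabelian.sdp (φ.comp (MonoidHom.fst K H)) ih)
  | @quot G₁ G₂ _ _ _ f hf hG₁ ih =>
      exact IsSemiabelian.quot (f.prodMap (MonoidHom.id H))
        (hf.prodMap Function.surjective_id) ih
end
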